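/- arXiv:1909.03633 — 3 statements merged into one kernel-verified Lean document; each statement's English description precedes it below -/
import Mathlib

section
/- Define J(u₀) = −√(2F(u₀)) + ∫₀^{u₀} √(F(t)/2) dt where F(s) = (s−1)e^s + 1. Then J(0) = 0, J is strictly decreasing on (0,∞), and consequently J(u₀) < 0 for all u₀ > 0. -/
open Real Set

noncomputable def Fa (s : ℝ) : ℝ := (s - 1) * Real.exp s + 1

noncomputable def J (u₀ : ℝ) : ℝ :=
  -Real.sqrt (2 * Fa u₀) + ∫ t in (0:ℝ)..u₀, Real.sqrt (Fa t / 2)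

/-!
Since `Fa'(s) = s eˢ` and `√(Fa/2) = Fa / √(2 Fa)`, the derivative of `J` at `u > 0` is
`(Fa u - Fa' u) / √(2 Fa u) = (1 - eᵘ) / √(2 Fa u) < 0`; here `Fa u > 0` because `Fa 0 = 0` and
`Fa` is increasing on `[0, ∞)`. As `J` is continuous with `J 0 = 0`, it is strictly decreasing
on `[0, ∞)`, hence negative on `(0, ∞)`.
-/

section NegSqrtAddIntegral

variable {F : ℝ → ℝ}

theorem continuous_neg_sqrt_add_integral_sqrt (hF : Continuous F) :
    Continuous fun u => -√(2 * F u) + ∫ t in (0:ℝ)..u, √(F t / 2) :=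
  ((hF.const_mul 2).sqrt).neg.add
    (intervalIntegral.continuous_primitive ((hF.div_const 2).sqrt.intervalIntegrable) 0)

theorem hasDerivAt_neg_sqrt_add_integral_sqrt {F' x : ℝ} (hF : Continuous F)
    (hF' : HasDerivAt F F' x) (hx : 0 < F x) :
    HasDerivAt (fun u => -√(2 * F u) + ∫ t in (0:ℝ)..u, √(F t / 2))
      ((F x - F') / √(2 * F x)) x := by
  have hsqrt : 0 < √(2 * F x) := Real.sqrt_pos.mpr (by positivity)
  have hhalf : √(F x / 2) = F x / √(2 * F x) := by
    rw [eq_div_iff hsqrt.ne', ← Real.sqrt_mul (by positivity),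
      show F x / 2 * (2 * F x) = F x ^ 2 by ring, Real.sqrt_sq hx.le]
  refine (((hF'.const_mul 2).sqrt (by positivity)).neg.add
    ((hF.div_const 2).sqrt.integral_hasStrictDerivAt 0 x).hasDerivAt).congr_deriv ?_
  rw [hhalf]
  field_simp
  ring

end NegSqrtAddIntegral

theorem hasDerivAt_Fa (x : ℝ) : HasDerivAt Fa (x * exp x) x := by
  refine ((((hasDerivAt_id x).sub_const 1).mul (hasDerivAt_exp x)).add_const 1).congr_deriv ?_
  simp only [id_eq]
  ring

theorem continuous_Fa : Continuous Fa := by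
  unfold Fa
  fun_prop

theorem Fa_pos {x : ℝ} (hx : 0 < x) : 0 < Fa x := by
  have hmono : StrictMonoOn Fa (Ici 0) :=
    strictMonoOn_of_deriv_pos (convex_Ici 0) continuous_Fa.continuousOn fun y hy => by
      rw [interior_Ici] at hy
      rw [(hasDerivAt_Fa y).deriv]
      exact mul_pos hy (exp_pos y)
  simpa [Fa] using hmono self_mem_Ici hx.le hx

theorem hasDerivAt_J {x : ℝ} (hx : 0 < x) :
    HasDerivAt J ((1 - exp x) / √(2 * Fa x)) x := by
  refine (hasDerivAt_neg_sqrt_add_integral_sqrt continuous_Fa (hasDerivAt_Fa x)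
    (Fa_pos hx)).congr_deriv ?_
  unfold Fa
  ring

theorem J_zero : J 0 = 0 := by
  simp [J, Fa]

theorem strictAntiOn_J : StrictAntiOn J (Ici 0) := by
  refine strictAntiOn_of_hasDerivWithinAt_neg (convex_Ici 0)
    (continuous_neg_sqrt_add_integral_sqrt continuous_Fa).continuousOn
    (f' := fun x => (1 - exp x) / √(2 * Fa x)) (fun x hx => ?_) fun x hx => ?_
  all_goals rw [interior_Ici] at hx
  · exact (hasDerivAt_J hx).hasDerivWithinAt
  · exact div_neg_of_neg_of_pos (by simpa using hx)
      (Real.sqrt_pos.mpr (by linarith [Fa_pos hx]))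

theorem J_neg : J 0 = 0 ∧ StrictAntiOn J (Set.Ioi 0) ∧ ∀ u₀ : ℝ, 0 < u₀ → J u₀ < 0 := by
  refine ⟨J_zero, strictAntiOn_J.mono Ioi_subset_Ici_self, fun u₀ hu₀ => ?_⟩
  simpa [J_zero] using strictAntiOn_J self_mem_Ici hu₀.le hu₀
end

section
/- Suppose v₁, v₂ ∈ C²(Ω) ∩ C⁰(Ω̄) are both positive solutions of ε²Δv = (m/∫_Ω e^v dx) v e^v in Ω with v₁ = v₂ = u₀ on ∂Ω, where m, u₀, ε > 0. If ∫_Ω e^{v₁} dx ≥ ∫_Ω e^{v₂} dx, then v₁ ≥ v₂ in Ω. -/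
/-!
If `v₂ > v₁` somewhere, then `v₂ - v₁`, which vanishes on `∂Ω`, attains a positive maximum at an
interior point `x₀`, where the second-order condition gives `Δv₂(x₀) ≤ Δv₁(x₀)`. But at `x₀`,
`v₁ < v₂` and `v₂ > 0` give `v₁e^{v₁} < v₂e^{v₂}`, while `∫e^{v₂} ≤ ∫e^{v₁}` makes `m / ∫e^{v₂}`
the larger coefficient; so the equations force `ε²Δv₂(x₀) > ε²Δv₁(x₀)`.
-/

open Real Set MeasureTheory

/-- The Euclidean Laplacian, written as the sum of second directional derivatives
along the standard basis directions. -/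
noncomputable def lap {N : ℕ} (u : EuclideanSpace ℝ (Fin N) → ℝ)
    (x : EuclideanSpace ℝ (Fin N)) : ℝ :=
  ∑ i : Fin N, fderiv ℝ (fun y => fderiv ℝ u y (EuclideanSpace.single i 1)) x
    (EuclideanSpace.single i 1)

open Filter Topology

theorem IsLocalMax.deriv_deriv_nonpos {f : ℝ → ℝ} {a : ℝ} (h : IsLocalMax f a)
    (hc : ContinuousAt f a) : deriv (deriv f) a ≤ 0 := by
  by_contra! hpos
  -- Otherwise `a` is also a local minimum, so `f` is constant near `a`.
  have hmin : IsLocalMin f a := isLocalMin_of_deriv_deriv_pos hpos h.deriv_eq_zero hc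
  have hconst : f =ᶠ[𝓝 a] fun _ => f a := by
    filter_upwards [h, hmin] with x hmax hmin' using le_antisymm hmax hmin'
  have hzero : deriv (deriv f) a = 0 := by
    rw [hconst.deriv.deriv_eq]
    simp
  exact hpos.ne' hzero

section DirectionalSecondDerivative

variable {E : Type*} [NormedAddCommGroup E] [NormedSpace ℝ E]

theorem IsLocalMax.fderiv_fderiv_apply_nonpos {w : E → ℝ} {x₀ : E} (e : E)
    (h : IsLocalMax w x₀) (hw : ∀ᶠ y in 𝓝 x₀, DifferentiableAt ℝ w y)
    (hw' : DifferentiableAt ℝ (fun y => fderiv ℝ w y e) x₀) :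
    fderiv ℝ (fun y => fderiv ℝ w y e) x₀ e ≤ 0 := by
  set line : ℝ → E := fun t => x₀ + t • e
  have hline : ∀ t, HasDerivAt line e t := fun t => by
    simpa only [one_smul] using ((hasDerivAt_id' t).smul_const e).const_add x₀
  have hline_cont : Continuous line := by fun_prop
  have hline_zero : line 0 = x₀ := by simp [line]
  have hnear : ∀ᶠ t in 𝓝 (0 : ℝ), DifferentiableAt ℝ w (line t) :=
    (hline_cont.tendsto' 0 x₀ hline_zero).eventually hw
  have hderiv : deriv (w ∘ line) =ᶠ[𝓝 0] fun t => fderiv ℝ w (line t) e := by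
    filter_upwards [hnear] with t ht using (ht.hasFDerivAt.comp_hasDerivAt t (hline t)).deriv
  have hsecond : deriv (deriv (w ∘ line)) 0 = fderiv ℝ (fun y => fderiv ℝ w y e) x₀ e := by
    rw [hderiv.deriv_eq]
    exact (hw'.hasFDerivAt.comp_hasDerivAt_of_eq 0 (hline 0) hline_zero.symm).deriv
  rw [← hsecond]
  refine IsLocalMax.deriv_deriv_nonpos ?_ ?_
  · exact (hline_zero ▸ h).comp_continuous hline_cont.continuousAt
  · exact hnear.self_of_nhds.continuousAt.comp hline_cont.continuousAt

theorem ContDiffAt.differentiableAt_fderiv_apply {u : E → ℝ} {x : E} (hu : ContDiffAt ℝ 2 u x)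
    (e : E) : DifferentiableAt ℝ (fun y => fderiv ℝ u y e) x :=
  ((hu.fderiv_right (m := 1) le_rfl).differentiableAt one_ne_zero).clm_apply
    (differentiableAt_const e)

theorem fderiv_fderiv_apply_sub {u v : E → ℝ} {x : E} (hu : ContDiffAt ℝ 2 u x)
    (hv : ContDiffAt ℝ 2 v x) (e : E) :
    fderiv ℝ (fun y => fderiv ℝ (u - v) y e) x e =
      fderiv ℝ (fun y => fderiv ℝ u y e) x e - fderiv ℝ (fun y => fderiv ℝ v y e) x e := by
  have hsub : (fun y => fderiv ℝ (u - v) y e) =ᶠ[𝓝 x]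
      (fun y => fderiv ℝ u y e) - fun y => fderiv ℝ v y e := by
    filter_upwards [hu.eventually (by simp), hv.eventually (by simp)] with y hu' hv'
    rw [fderiv_sub (hu'.differentiableAt two_ne_zero) (hv'.differentiableAt two_ne_zero)]
    rfl
  rw [hsub.fderiv_eq, fderiv_sub (hu.differentiableAt_fderiv_apply e)
    (hv.differentiableAt_fderiv_apply e)]
  rfl

end DirectionalSecondDerivative

section Laplacian

variable {N : ℕ} {u v : EuclideanSpace ℝ (Fin N) → ℝ} {x : EuclideanSpace ℝ (Fin N)}

theorem lap_sub (hu : ContDiffAt ℝ 2 u x) (hv : ContDiffAt ℝ 2 v x) :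
    lap (u - v) x = lap u x - lap v x := by
  simp only [lap, ← Finset.sum_sub_distrib, fderiv_fderiv_apply_sub hu hv]

theorem IsLocalMax.lap_nonpos (h : IsLocalMax u x) (hu : ContDiffAt ℝ 2 u x) : lap u x ≤ 0 :=
  Finset.sum_nonpos fun _ _ => h.fderiv_fderiv_apply_nonpos _
    ((hu.eventually (by simp)).mono fun _ hy => hy.differentiableAt two_ne_zero)
    (hu.differentiableAt_fderiv_apply _)

end Laplacian

theorem IsOpen.exists_isLocalMax_pos {X : Type*} [TopologicalSpace X] {U : Set X} {w : X → ℝ}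
    (hU : IsOpen U) (hK : IsCompact (closure U)) (hw : ContinuousOn w (closure U))
    (hfr : ∀ x ∈ frontier U, w x ≤ 0) {x : X} (hx : x ∈ U) (hpos : 0 < w x) :
    ∃ x₀ ∈ U, 0 < w x₀ ∧ IsLocalMax w x₀ := by
  obtain ⟨x₀, hx₀K, hmax⟩ := hK.exists_isMaxOn ⟨x, subset_closure hx⟩ hw
  have hpos₀ : 0 < w x₀ := hpos.trans_le (hmax (subset_closure hx))
  have hx₀ : x₀ ∈ U := by
    by_contra hx₀U
    have : x₀ ∈ frontier U := by rw [hU.frontier_eq]; exact ⟨hx₀K, hx₀U⟩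
    exact (hfr x₀ this).not_gt hpos₀
  exact ⟨x₀, hx₀, hpos₀,
    hmax.isLocalMax (mem_of_superset (hU.mem_nhds hx₀) subset_closure)⟩

theorem IsOpen.setIntegral_exp_pos {X : Type*} [TopologicalSpace X] [T2Space X]
    [MeasurableSpace X] [OpensMeasurableSpace X] {μ : Measure X} [μ.IsOpenPosMeasure]
    [IsFiniteMeasureOnCompacts μ] {U : Set X} {v : X → ℝ} (hU : IsOpen U) (hne : U.Nonempty)
    (hK : IsCompact (closure U)) (hv : ContinuousOn v (closure U)) :
    0 < ∫ x in U, exp (v x) ∂μ := by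
  have : NeZero (μ U) := ⟨(hU.measure_pos μ hne).ne'⟩
  exact integral_exp_pos <|
    ((continuous_exp.comp_continuousOn hv).integrableOn_compact hK).mono_set subset_closure

theorem mul_exp_lt_mul_exp {x y : ℝ} (hxy : x < y) (hy : 0 < y) : x * exp x < y * exp y := by
  rcases le_or_gt x 0 with hx | hx
  · exact (mul_nonpos_of_nonpos_of_nonneg hx (exp_pos x).le).trans_lt (by positivity)
  · exact mul_lt_mul hxy (exp_le_exp.mpr hxy.le) (exp_pos x) hy.le

theorem nonlocal_comparison_general {N : ℕ}
    (Ω : Set (EuclideanSpace ℝ (Fin N)))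
    (hΩopen : IsOpen Ω) (hΩbdd : Bornology.IsBounded Ω)
    (ε m u₀ : ℝ) (hm : 0 < m)
    (v₁ v₂ : EuclideanSpace ℝ (Fin N) → ℝ)
    (hv₁_cont : ContinuousOn v₁ (closure Ω)) (hv₂_cont : ContinuousOn v₂ (closure Ω))
    (hv₁_smooth : ContDiffOn ℝ 2 v₁ Ω) (hv₂_smooth : ContDiffOn ℝ 2 v₂ Ω)
    (hv₂_pos : ∀ x ∈ Ω, 0 < v₂ x)
    (heq₁ : ∀ x ∈ Ω, ε ^ 2 * lap v₁ x
      = m / (∫ y in Ω, Real.exp (v₁ y)) * v₁ x * Real.exp (v₁ x))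
    (heq₂ : ∀ x ∈ Ω, ε ^ 2 * lap v₂ x
      = m / (∫ y in Ω, Real.exp (v₂ y)) * v₂ x * Real.exp (v₂ x))
    (hbdry₁ : ∀ x ∈ frontier Ω, v₁ x = u₀)
    (hbdry₂ : ∀ x ∈ frontier Ω, v₂ x = u₀)
    (hint : (∫ y in Ω, Real.exp (v₂ y)) ≤ ∫ y in Ω, Real.exp (v₁ y)) :
    ∀ x ∈ Ω, v₂ x ≤ v₁ x := by
  intro x hx
  by_contra! hlt
  have hK : IsCompact (closure Ω) := hΩbdd.isCompact_closure
  obtain ⟨x₀, hx₀, hpos, hmax⟩ := hΩopen.exists_isLocalMax_pos hK (hv₂_cont.sub hv₁_cont)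
    (fun y hy => by simp [hbdry₁ y hy, hbdry₂ y hy]) hx (sub_pos.mpr hlt)
  have hv₂x₀ := hv₂_pos x₀ hx₀
  have hC₁ := hv₁_smooth.contDiffAt (hΩopen.mem_nhds hx₀)
  have hC₂ := hv₂_smooth.contDiffAt (hΩopen.mem_nhds hx₀)
  have hlap : lap v₂ x₀ ≤ lap v₁ x₀ :=
    sub_nonpos.mp (lap_sub hC₂ hC₁ ▸ hmax.lap_nonpos (hC₂.sub hC₁))
  have hI₂ : 0 < ∫ y in Ω, exp (v₂ y) := hΩopen.setIntegral_exp_pos ⟨x, hx⟩ hK hv₂_cont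
  have hI₁ : 0 < ∫ y in Ω, exp (v₁ y) := hI₂.trans_le hint
  refine lt_irrefl (m / (∫ y in Ω, exp (v₁ y)) * (v₁ x₀ * exp (v₁ x₀))) ?_
  calc m / (∫ y in Ω, exp (v₁ y)) * (v₁ x₀ * exp (v₁ x₀))
      < m / (∫ y in Ω, exp (v₁ y)) * (v₂ x₀ * exp (v₂ x₀)) :=
        mul_lt_mul_of_pos_left (mul_exp_lt_mul_exp (sub_pos.mp hpos) hv₂x₀) (div_pos hm hI₁)
    _ ≤ m / (∫ y in Ω, exp (v₂ y)) * (v₂ x₀ * exp (v₂ x₀)) := by gcongr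
    _ = ε ^ 2 * lap v₂ x₀ := by rw [heq₂ x₀ hx₀, mul_assoc]
    _ ≤ ε ^ 2 * lap v₁ x₀ := by gcongr
    _ = m / (∫ y in Ω, exp (v₁ y)) * (v₁ x₀ * exp (v₁ x₀)) := by rw [heq₁ x₀ hx₀, mul_assoc]

theorem nonlocal_comparison {N : ℕ}
    (Ω : Set (EuclideanSpace ℝ (Fin N)))
    (hΩopen : IsOpen Ω) (hΩbdd : Bornology.IsBounded Ω) (hΩconn : IsConnected Ω)
    (ε m u₀ : ℝ) (hε : 0 < ε) (hm : 0 < m) (hu₀ : 0 < u₀)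
    (v₁ v₂ : EuclideanSpace ℝ (Fin N) → ℝ)
    (hv₁_cont : ContinuousOn v₁ (closure Ω)) (hv₂_cont : ContinuousOn v₂ (closure Ω))
    (hv₁_smooth : ContDiffOn ℝ 2 v₁ Ω) (hv₂_smooth : ContDiffOn ℝ 2 v₂ Ω)
    (hv₁_pos : ∀ x ∈ Ω, 0 < v₁ x) (hv₂_pos : ∀ x ∈ Ω, 0 < v₂ x)
    (heq₁ : ∀ x ∈ Ω, ε ^ 2 * lap v₁ x
      = m / (∫ y in Ω, Real.exp (v₁ y)) * v₁ x * Real.exp (v₁ x))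
    (heq₂ : ∀ x ∈ Ω, ε ^ 2 * lap v₂ x
      = m / (∫ y in Ω, Real.exp (v₂ y)) * v₂ x * Real.exp (v₂ x))
    (hbdry₁ : ∀ x ∈ frontier Ω, v₁ x = u₀)
    (hbdry₂ : ∀ x ∈ frontier Ω, v₂ x = u₀)
    (hint : (∫ y in Ω, Real.exp (v₂ y)) ≤ ∫ y in Ω, Real.exp (v₁ y)) :
    ∀ x ∈ Ω, v₂ x ≤ v₁ x :=
  nonlocal_comparison_general Ω hΩopen hΩbdd ε m u₀ hm v₁ v₂ hv₁_cont hv₂_cont hv₁_smooth hv₂_smooth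
    hv₂_pos heq₁ heq₂ hbdry₁ hbdry₂ hint
end

section
/- Let ψ : [0,R] → (0, u₀] be continuous with 0 < ψ(r) ≤ C₁ e^{−(M₁/ε)(R−r)} for constants C₁, M₁ > 0. Then |(N/R^N) ∫₀^R e^{ψ(s)} s^{N−1} ds − 1| ≤ (N (e^{u₀} − 1) C₁ / (R u₀ M₁)) ε. -/
/-!
Write `f = e^{ψ} - 1`. Since `∫₀^R s^{N-1} = R^N/N`, the quantity inside the absolute value is
`(N/R^N) ∫₀^R f(s) s^{N-1} ds`, which is nonnegative. Convexity of `exp` gives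
`0 ≤ f ≤ ((e^{u₀}-1)/u₀) ψ ≤ ((e^{u₀}-1)/u₀) C₁ e^{-c(R-s)}` with `c = M₁/ε`;
bounding `s^{N-1}` by `R^{N-1}` and integrating the exponential, which contributes at most `1/c`,
gives the estimate.
-/

open Real Set intervalIntegral

lemma exp_sub_one_le_mul_of_le {t u : ℝ} (hu : 0 < u) (ht : 0 ≤ t) (htu : t ≤ u) :
    exp t - 1 ≤ (exp u - 1) / u * t := by
  rcases ht.eq_or_lt with rfl | ht
  · simp
  have hsecant := convexOn_exp.secant_mono (mem_univ 0) (mem_univ t) (mem_univ u) ht.ne'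
    hu.ne' htu
  simp only [exp_zero, sub_zero] at hsecant
  rwa [div_le_iff₀ ht] at hsecant

lemma integral_pow_pred {N : ℕ} (hN : 1 ≤ N) (R : ℝ) :
    ∫ s in (0 : ℝ)..R, s ^ (N - 1) = R ^ N / N := by
  obtain ⟨n, rfl⟩ := Nat.exists_eq_add_of_le' hN
  simp [integral_pow]

lemma integral_exp_neg_mul_sub {c : ℝ} (hc : c ≠ 0) (a b : ℝ) :
    ∫ s in a..b, exp (-c * (b - s)) = (1 - exp (-c * (b - a))) / c := by
  have hderiv : ∀ s, HasDerivAt (fun s => exp (-c * (b - s)) / c) (exp (-c * (b - s))) s := by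
    intro s
    have h := (((hasDerivAt_id' s).const_sub b).const_mul (-c)).exp.div_const c
    rwa [mul_neg_one, neg_neg, mul_div_assoc, div_self hc, mul_one] at h
  rw [integral_eq_sub_of_hasDerivAt (fun s _ => hderiv s)
    (Continuous.intervalIntegrable (by fun_prop) _ _)]
  simp [sub_div]

lemma integral_exp_neg_mul_sub_le {c : ℝ} (hc : 0 < c) (a b : ℝ) :
    ∫ s in a..b, exp (-c * (b - s)) ≤ 1 / c := by
  rw [integral_exp_neg_mul_sub hc.ne']
  gcongr
  linarith [exp_pos (-c * (b - a))]

section RadialAverage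

variable {N : ℕ} {R B c : ℝ} {g : ℝ → ℝ}

lemma radial_average_sub_one (hN : 1 ≤ N) (hR : 0 < R) (hg : ContinuousOn g (Icc 0 R)) :
    (N : ℝ) / R ^ N * (∫ s in (0 : ℝ)..R, g s * s ^ (N - 1)) - 1
      = (N : ℝ) / R ^ N * ∫ s in (0 : ℝ)..R, (g s - 1) * s ^ (N - 1) := by
  have hgi : IntervalIntegrable (fun s => g s * s ^ (N - 1)) MeasureTheory.volume 0 R :=
    (hg.mul (continuous_pow _).continuousOn).intervalIntegrable_of_Icc hR.le
  have hN₀ : (N : ℝ) ≠ 0 := by positivity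
  have hRN : R ^ N ≠ 0 := by positivity
  simp_rw [sub_mul, one_mul]
  rw [integral_sub hgi ((continuous_pow _).intervalIntegrable _ _), integral_pow_pred hN]
  field_simp

lemma integral_sub_one_mul_pow_le (hR : 0 ≤ R) (hg : ContinuousOn g (Icc 0 R)) (hB : 0 ≤ B)
    (hc : 0 < c) (hbound : ∀ s ∈ Icc 0 R, g s - 1 ≤ B * exp (-c * (R - s))) :
    ∫ s in (0 : ℝ)..R, (g s - 1) * s ^ (N - 1) ≤ B * R ^ (N - 1) / c := by
  calc ∫ s in (0 : ℝ)..R, (g s - 1) * s ^ (N - 1)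
      ≤ ∫ s in (0 : ℝ)..R, B * R ^ (N - 1) * exp (-c * (R - s)) := by
        refine integral_mono_on hR ?_ (Continuous.intervalIntegrable (by fun_prop) _ _)
          fun s hs => ?_
        · exact ((hg.sub continuousOn_const).mul
            (continuous_pow _).continuousOn).intervalIntegrable_of_Icc hR
        · calc (g s - 1) * s ^ (N - 1) ≤ B * exp (-c * (R - s)) * s ^ (N - 1) := by
                gcongr
                · exact pow_nonneg hs.1 _
                · exact hbound s hs
            _ ≤ B * exp (-c * (R - s)) * R ^ (N - 1) := by
                gcongr
                exacts [hs.1, hs.2]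
            _ = B * R ^ (N - 1) * exp (-c * (R - s)) := by ring
    _ ≤ B * R ^ (N - 1) * (1 / c) := by
        rw [integral_const_mul]
        gcongr
        exact integral_exp_neg_mul_sub_le hc 0 R
    _ = B * R ^ (N - 1) / c := by ring

lemma abs_radial_average_sub_one_le (hN : 1 ≤ N) (hR : 0 < R) (hg : ContinuousOn g (Icc 0 R))
    (hc : 0 < c) (hg_ge : ∀ s ∈ Icc 0 R, 1 ≤ g s)
    (hbound : ∀ s ∈ Icc 0 R, g s - 1 ≤ B * exp (-c * (R - s))) :
    |(N : ℝ) / R ^ N * (∫ s in (0 : ℝ)..R, g s * s ^ (N - 1)) - 1| ≤ N * B / (R * c) := by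
  have hRmem : R ∈ Icc 0 R := ⟨hR.le, le_rfl⟩
  have hB : 0 ≤ B := by simpa using (sub_nonneg.2 (hg_ge R hRmem)).trans (hbound R hRmem)
  have hI_nonneg : 0 ≤ ∫ s in (0 : ℝ)..R, (g s - 1) * s ^ (N - 1) :=
    integral_nonneg hR.le fun s hs => mul_nonneg (sub_nonneg.2 (hg_ge s hs)) (pow_nonneg hs.1 _)
  have hRN : R ^ N = R ^ (N - 1) * R := by rw [← pow_succ, Nat.sub_add_cancel hN]
  rw [radial_average_sub_one hN hR hg, abs_of_nonneg (by positivity)]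
  calc (N : ℝ) / R ^ N * ∫ s in (0 : ℝ)..R, (g s - 1) * s ^ (N - 1)
      ≤ (N : ℝ) / R ^ N * (B * R ^ (N - 1) / c) := by
        gcongr
        exact integral_sub_one_mul_pow_le hR.le hg hB hc hbound
    _ = N * B / (R * c) := by
        rw [hRN]
        field_simp

end RadialAverage

theorem nonlocal_coefficient_estimate_general
    (N : ℕ) (hN : 1 ≤ N) (R u₀ ε C₁ M₁ : ℝ) (hR : 0 < R) (hu₀ : 0 < u₀)
    (hε : 0 < ε) (hM₁ : 0 < M₁)
    (ψ : ℝ → ℝ) (hψ_cont : ContinuousOn ψ (Set.Icc 0 R))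
    (hψ_bdd : ∀ r ∈ Set.Icc (0 : ℝ) R, 0 < ψ r ∧ ψ r ≤ u₀)
    (hψ_decay : ∀ r ∈ Set.Icc (0 : ℝ) R, ψ r ≤ C₁ * Real.exp (-(M₁ / ε) * (R - r))) :
    |(N : ℝ) / R ^ N * (∫ s in (0:ℝ)..R, Real.exp (ψ s) * s ^ (N - 1)) - 1|
      ≤ (N : ℝ) * (Real.exp u₀ - 1) * C₁ / (R * u₀ * M₁) * ε := by
  have hK : 0 ≤ (exp u₀ - 1) / u₀ := div_nonneg (by linarith [add_one_le_exp u₀]) hu₀.le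
  have hbound : ∀ s ∈ Icc 0 R,
      exp (ψ s) - 1 ≤ (exp u₀ - 1) / u₀ * C₁ * exp (-(M₁ / ε) * (R - s)) := fun s hs =>
    calc exp (ψ s) - 1 ≤ (exp u₀ - 1) / u₀ * ψ s :=
          exp_sub_one_le_mul_of_le hu₀ (hψ_bdd s hs).1.le (hψ_bdd s hs).2
      _ ≤ (exp u₀ - 1) / u₀ * C₁ * exp (-(M₁ / ε) * (R - s)) := by
          rw [mul_assoc]
          exact mul_le_mul_of_nonneg_left (hψ_decay s hs) hK
  refine (abs_radial_average_sub_one_le (g := fun s => exp (ψ s)) hN hR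
    (continuous_exp.comp_continuousOn hψ_cont) (div_pos hM₁ hε)
    (fun s hs => one_le_exp (hψ_bdd s hs).1.le) hbound).trans_eq ?_
  field_simp

theorem nonlocal_coefficient_estimate
    (N : ℕ) (hN : 1 ≤ N) (R u₀ ε C₁ M₁ : ℝ) (hR : 0 < R) (hu₀ : 0 < u₀)
    (hε : 0 < ε) (hC₁ : 0 < C₁) (hM₁ : 0 < M₁)
    (ψ : ℝ → ℝ) (hψ_cont : ContinuousOn ψ (Set.Icc 0 R))
    (hψ_bdd : ∀ r ∈ Set.Icc (0 : ℝ) R, 0 < ψ r ∧ ψ r ≤ u₀)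
    (hψ_decay : ∀ r ∈ Set.Icc (0 : ℝ) R, ψ r ≤ C₁ * Real.exp (-(M₁ / ε) * (R - r))) :
    |(N : ℝ) / R ^ N * (∫ s in (0:ℝ)..R, Real.exp (ψ s) * s ^ (N - 1)) - 1|
      ≤ (N : ℝ) * (Real.exp u₀ - 1) * C₁ / (R * u₀ * M₁) * ε :=
  nonlocal_coefficient_estimate_general N hN R u₀ ε C₁ M₁ hR hu₀ hε hM₁ ψ hψ_cont hψ_bdd hψ_decay
end
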